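/- arXiv:2409.16192 — 7 statements merged into one kernel-verified Lean document; each statement's English description precedes it below -/
import Mathlib

section
/- For every ideal 𝔞 of a semiring S, the Golan closure satisfies c(𝔞) ⊆ √𝔞, where √𝔞 = {x ∈ S : xⁿ ∈ 𝔞 for some positive integer n}. -/
/-- An ideal `a` of a commutative semiring is *semisubtractive* if for every `x ∈ a`
having an additive inverse `y` (i.e. `x + y = 0`), the inverse `y` also lies in `a`. -/
def IsSemisubtractive {S : Type*} [CommSemiring S] (a : Ideal S) : Prop :=
  ∀ x ∈ a, ∀ y : S, x + y = 0 → y ∈ a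

/-- The *Golan closure* of an ideal `a`: the intersection of all semisubtractive ideals
containing `a`. -/
def golanClosure {S : Type*} [CommSemiring S] (a : Ideal S) : Ideal S :=
  sInf {b : Ideal S | IsSemisubtractive b ∧ a ≤ b}

lemma radical_semisubtractive {S : Type*} [CommSemiring S] (a : Ideal S) :
    IsSemisubtractive a.radical := by
  intro x hx y hxy
  obtain ⟨n, hn⟩ := hx
  have hsq : y ^ 2 = x ^ 2 := by
    have : x ^ 2 + x * y = x * (x + y) := by ring
    calc y ^ 2 = 0 + y ^ 2 := by ring
    _ = x * (x + y) + y ^ 2 := by rw [hxy, mul_zero]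
    _ = x ^ 2 + (x * y + y ^ 2) := by ring
    _ = x ^ 2 + y * (x + y) := by ring
    _ = x ^ 2 := by rw [hxy, mul_zero, add_zero]
  refine ⟨2 * n, ?_⟩
  have : y ^ (2 * n) = (x ^ n) ^ 2 := by
    rw [pow_mul, hsq, ← pow_mul, mul_comm, pow_mul]
  rw [this, sq]
  exact Ideal.mul_mem_left _ _ hn

/-- For every ideal `a`, the Golan closure satisfies `c(a) ⊆ √a`, where
`√a = {x : xⁿ ∈ a for some positive integer n}`. -/
theorem golanClosure_le_radical {S : Type*} [CommSemiring S] [Nontrivial S]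
    (a : Ideal S) :
    (golanClosure a : Set S) ⊆ {x : S | ∃ n : ℕ, 0 < n ∧ x ^ n ∈ a} := by
  intro x hx
  have hle : golanClosure a ≤ a.radical :=
    sInf_le ⟨radical_semisubtractive a, Ideal.le_radical⟩
  obtain ⟨n, hn⟩ := hle hx
  rcases Nat.eq_zero_or_pos n with rfl | hpos
  · simp only [pow_zero] at hn
    exact ⟨1, one_pos, by simpa using Ideal.mul_mem_left a x hn⟩
  · exact ⟨n, hpos, hn⟩
end

section
/- A semisubtractive ideal 𝔠 of a semiring S is s-strongly irreducible if and only if for all x, y ∈ S, the inclusion c(⟨x⟩) ∩ c(⟨y⟩) ⊆ 𝔠 implies x ∈ 𝔠 or y ∈ 𝔠, where ⟨x⟩ denotes the principal ideal generated by x. -/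
/-- A semisubtractive ideal `c` is *s-strongly irreducible* if for all semisubtractive
ideals `b`, `b'`, `b ∩ b' ⊆ c` implies `b ⊆ c` or `b' ⊆ c`. -/
def SStronglyIrreducible {S : Type*} [CommSemiring S] (c : Ideal S) : Prop :=
  IsSemisubtractive c ∧ ∀ b b' : Ideal S, IsSemisubtractive b → IsSemisubtractive b' →
    b ⊓ b' ≤ c → b ≤ c ∨ b' ≤ c

lemma golanClosure_semisubtractive {S : Type*} [CommSemiring S] (a : Ideal S) :
    IsSemisubtractive (golanClosure a) := by
  intro x hx y hxy
  rw [golanClosure, Ideal.mem_sInf] at hx ⊢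
  intro b hb
  exact hb.1 x (hx hb) y hxy

lemma le_golanClosure {S : Type*} [CommSemiring S] (a : Ideal S) : a ≤ golanClosure a := by
  rw [golanClosure]
  exact le_sInf fun b hb => hb.2

lemma golanClosure_le {S : Type*} [CommSemiring S] {a b : Ideal S}
    (hb : IsSemisubtractive b) (h : a ≤ b) : golanClosure a ≤ b :=
  sInf_le ⟨hb, h⟩

/-- A semisubtractive ideal `c` is s-strongly irreducible iff for all `x`, `y`,
`c(⟨x⟩) ∩ c(⟨y⟩) ⊆ c` implies `x ∈ c` or `y ∈ c`. -/
theorem sStronglyIrreducible_iff_elementwise {S : Type*} [CommSemiring S] [Nontrivial S]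
    (c : Ideal S) (hc : IsSemisubtractive c) :
    SStronglyIrreducible c ↔
      ∀ x y : S, golanClosure (Ideal.span {x}) ⊓ golanClosure (Ideal.span {y}) ≤ c →
        x ∈ c ∨ y ∈ c := by
  constructor
  · rintro ⟨-, h⟩ x y hxy
    rcases h _ _ (golanClosure_semisubtractive _) (golanClosure_semisubtractive _) hxy with
      h' | h'
    · exact Or.inl (h' (le_golanClosure _ (Ideal.subset_span rfl)))
    · exact Or.inr (h' (le_golanClosure _ (Ideal.subset_span rfl)))
  · intro h
    refine ⟨hc, fun b b' hb hb' hle => ?_⟩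
    by_contra hcon
    push_neg at hcon
    obtain ⟨x, hxb, hxc⟩ := Set.not_subset.mp hcon.1
    obtain ⟨y, hyb, hyc⟩ := Set.not_subset.mp hcon.2
    have h1 : golanClosure (Ideal.span {x}) ≤ b :=
      golanClosure_le hb (Ideal.span_le.mpr (Set.singleton_subset_iff.mpr hxb))
    have h2 : golanClosure (Ideal.span {y}) ≤ b' :=
      golanClosure_le hb' (Ideal.span_le.mpr (Set.singleton_subset_iff.mpr hyb))
    rcases h x y (le_trans (inf_le_inf h1 h2) hle) with h' | h'
    · exact hxc h'
    · exact hyc h'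
end

section
/- Let S be a semiring, let x ∈ S with x ≠ 0, and let 𝔠 be a proper semisubtractive ideal of S with x ∉ 𝔠. Then there exists an s-irreducible ideal 𝔟 of S such that 𝔠 ⊆ 𝔟 and x ∉ 𝔟. -/
/-- A semisubtractive ideal `c` is *s-irreducible* if for all semisubtractive ideals
`b`, `b'`, `b ∩ b' = c` implies `b = c` or `b' = c`. -/
def SIrreducible {S : Type*} [CommSemiring S] (c : Ideal S) : Prop :=
  IsSemisubtractive c ∧ ∀ b b' : Ideal S, IsSemisubtractive b → IsSemisubtractive b' →
    b ⊓ b' = c → b = c ∨ b' = c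

/-- If `c` is a proper semisubtractive ideal and `0 ≠ x ∉ c`, then there is an
s-irreducible ideal `b ⊇ c` with `x ∉ b`. -/
theorem exists_sIrreducible_avoiding {S : Type*} [CommSemiring S] [Nontrivial S]
    (x : S) (hx : x ≠ 0) (c : Ideal S) (hc : IsSemisubtractive c) (hcproper : c ≠ ⊤)
    (hxc : x ∉ c) :
    ∃ b : Ideal S, SIrreducible b ∧ c ≤ b ∧ x ∉ b := by
  set T : Set (Ideal S) := {b | IsSemisubtractive b ∧ c ≤ b ∧ x ∉ b} with hT
  have hcT : c ∈ T := ⟨hc, le_refl _, hxc⟩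
  have hchainub : ∀ ch ⊆ T, IsChain (· ≤ ·) ch → ∀ y ∈ ch, ∃ ub ∈ T, ∀ z ∈ ch, z ≤ ub := by
    intro ch hch hchain y hy
    refine ⟨sSup ch, ⟨?_, ?_, ?_⟩, fun z hz => le_sSup hz⟩
    · intro a ha m hm
      obtain ⟨p, hp, hap⟩ := (Submodule.mem_sSup_of_directed ⟨y, hy⟩ hchain.directedOn).1 ha
      exact le_sSup hp ((hch hp).1 a hap m hm)
    · exact le_trans (hch hy).2.1 (le_sSup hy)
    · intro hxs
      obtain ⟨p, hp, hxp⟩ := (Submodule.mem_sSup_of_directed ⟨y, hy⟩ hchain.directedOn).1 hxs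
      exact (hch hp).2.2 hxp
  obtain ⟨b, hcb, hbT, hmax⟩ := zorn_le_nonempty₀ T hchainub c hcT
  refine ⟨b, ⟨hbT.1, ?_⟩, hbT.2.1, hbT.2.2⟩
  intro b₁ b₂ hb₁ hb₂ hinf
  by_cases h₁ : x ∈ b₁
  · by_cases h₂ : x ∈ b₂
    · exact absurd (hinf ▸ (Submodule.mem_inf).2 ⟨h₁, h₂⟩) hbT.2.2
    · right
      have hle : b ≤ b₂ := hinf ▸ inf_le_right
      exact le_antisymm (hmax ⟨hb₂, le_trans hbT.2.1 hle, h₂⟩ hle) hle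
  · left
    have hle : b ≤ b₁ := hinf ▸ inf_le_left
    exact le_antisymm (hmax ⟨hb₁, le_trans hbT.2.1 hle, h₁⟩ hle) hle
end

section
/- Every proper semisubtractive ideal 𝔠 of a semiring S is the intersection of all s-irreducible ideals of S containing it: 𝔠 = ⋂{𝔟 : 𝔟 is an s-irreducible ideal of S with 𝔠 ⊆ 𝔟}. -/
/-- Every proper semisubtractive ideal is the intersection of the s-irreducible ideals
containing it. -/
theorem semisubtractive_eq_sInf_sIrreducible {S : Type*} [CommSemiring S] [Nontrivial S]
    (c : Ideal S) (hc : IsSemisubtractive c) (hcproper : c ≠ ⊤) :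
    c = sInf {b : Ideal S | SIrreducible b ∧ c ≤ b} := by
  refine le_antisymm (le_sInf fun b hb => hb.2) ?_
  intro x hx
  by_contra hxc
  -- Zorn's lemma: maximal semisubtractive ideal containing c and not x
  set P : Set (Ideal S) := {b | IsSemisubtractive b ∧ c ≤ b ∧ x ∉ b} with hP
  have hchain : ∀ ch ⊆ P, IsChain (· ≤ ·) ch → ∀ y ∈ ch,
      ∃ ub ∈ P, ∀ z ∈ ch, z ≤ ub := by
    intro ch hchP hch y hy
    refine ⟨sSup ch, ⟨?_, ?_, ?_⟩, fun z hz => le_sSup hz⟩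
    · intro a ha b hab
      obtain ⟨i, hi, hai⟩ := (Submodule.mem_sSup_of_directed ⟨y, hy⟩ hch.directedOn).1 ha
      exact le_sSup hi ((hchP hi).1 a hai b hab)
    · exact ((hchP hy).2.1).trans (le_sSup hy)
    · intro hxs
      obtain ⟨i, hi, hxi⟩ := (Submodule.mem_sSup_of_directed ⟨y, hy⟩ hch.directedOn).1 hxs
      exact (hchP hi).2.2 hxi
  obtain ⟨m, hcm, hmP, hmax⟩ := zorn_le_nonempty₀ P hchain c ⟨hc, le_rfl, hxc⟩
  -- m is s-irreducible
  have hmirr : SIrreducible m := by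
    refine ⟨hmP.1, fun b b' hb hb' hinf => ?_⟩
    by_contra h
    push_neg at h
    obtain ⟨hbm, hb'm⟩ := h
    have hmb : m ≤ b := hinf ▸ inf_le_left
    have hmb' : m ≤ b' := hinf ▸ inf_le_right
    have hxb : x ∈ b := by
      by_contra hxb
      exact hbm (le_antisymm (hmax ⟨hb, hmP.2.1.trans hmb, hxb⟩ hmb) hmb)
    have hxb' : x ∈ b' := by
      by_contra hxb'
      exact hb'm (le_antisymm (hmax ⟨hb', hmP.2.1.trans hmb', hxb'⟩ hmb') hmb')
    exact hmP.2.2 (hinf ▸ (Submodule.mem_inf.2 ⟨hxb, hxb'⟩))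
  have hmem : m ∈ {b : Ideal S | SIrreducible b ∧ c ≤ b} := ⟨hmirr, hmP.2.1⟩
  exact hmP.2.2 (sInf_le hmem hx)
end

section
/- Let S be a semiring and consider the semisubtractive space Id_s(S). For every semisubtractive ideal 𝔞 of S, the subbasic closed set h(𝔞) = {𝔟 ∈ Id_s(S) : 𝔞 ⊆ 𝔟} is equal to the topological closure of the one-point set {𝔞} in Id_s(S); in particular, every nonempty subbasic closed set h(𝔞) is an irreducible closed subset of Id_s(S). -/
/-- The set `Id_s(S)` of semisubtractive ideals of `S`. -/
def SSIdeal (S : Type*) [CommSemiring S] : Type _ :=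
  {a : Ideal S // IsSemisubtractive a}

/-- The subbasic closed set `h(a) = {b ∈ Id_s(S) : a ⊆ b}`. -/
def hSet {S : Type*} [CommSemiring S] (a : SSIdeal S) : Set (SSIdeal S) :=
  {b : SSIdeal S | a.1 ≤ b.1}

/-- The semisubtractive topology on `Id_s(S)`: generated by taking the sets `h(a)` as a
subbasis of closed sets, i.e. generated by the open sets `h(a)ᶜ`. -/
instance ssTopology (S : Type*) [CommSemiring S] : TopologicalSpace (SSIdeal S) :=
  TopologicalSpace.generateFrom {U : Set (SSIdeal S) | ∃ a : SSIdeal S, U = (hSet a)ᶜ}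

lemma hSet_closed {S : Type*} [CommSemiring S] (a : SSIdeal S) : IsClosed (hSet a) := by
  rw [← isOpen_compl_iff]
  exact TopologicalSpace.GenerateOpen.basic _ ⟨a, rfl⟩

lemma mem_of_genOpen {S : Type*} [CommSemiring S] {a b : SSIdeal S} (hab : a.1 ≤ b.1)
    {U : Set (SSIdeal S)}
    (hU : TopologicalSpace.GenerateOpen {U : Set (SSIdeal S) | ∃ a : SSIdeal S, U = (hSet a)ᶜ} U)
    (hb : b ∈ U) : a ∈ U := by
  induction hU with
  | basic V hV =>
    obtain ⟨c, rfl⟩ := hV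
    intro hca
    exact hb (le_trans hca hab)
  | univ => trivial
  | inter V W _ _ ihV ihW => exact ⟨ihV hb.1, ihW hb.2⟩
  | sUnion 𝒮 _ ih =>
    obtain ⟨V, hV, hbV⟩ := hb
    exact ⟨V, hV, ih V hV hbV⟩

/-- Each subbasic closed set `h(a)` is the closure of `{a}`; in particular it is an
irreducible (closed) subset of the semisubtractive space. -/
theorem hSet_eq_closure_singleton_and_irreducible {S : Type*} [CommSemiring S]
    [Nontrivial S] (a : SSIdeal S) :
    hSet a = closure {a} ∧ IsIrreducible (hSet a) := by
  have heq : hSet a = closure {a} := by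
    apply le_antisymm
    · intro b hb
      rw [mem_closure_iff]
      intro U hU hbU
      exact ⟨a, mem_of_genOpen hb hU hbU, rfl⟩
    · refine closure_minimal ?_ (hSet_closed a)
      intro b hb
      rw [Set.mem_singleton_iff] at hb
      subst hb
      exact le_refl b.1
  exact ⟨heq, heq ▸ isIrreducible_singleton.closure⟩
end

section
/- For every semiring S, the semisubtractive space Id_s(S) is sober: every nonempty irreducible closed subset of Id_s(S) has a unique generic point (i.e., there is a unique point whose closure is that set). -/
open Set Topology

namespace Topology.IsLower

variable {α : Type*} [CompleteSemilatticeInf α] [TopologicalSpace α] [IsLower α]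

theorem sInf_mem_of_isIrreducible {s : Set α} (hs : IsIrreducible s) (hs' : IsClosed s) :
    sInf s ∈ s := by
  by_contra h
  obtain ⟨_, ⟨t, ht, rfl⟩, hmem, hdisj⟩ :=
    IsLower.isTopologicalBasis.exists_subset_of_mem_open h hs'.isOpen_compl
  have hcover : s ⊆ ⋃₀ ↑(ht.toFinset.image Ici) := fun x hx => by
    obtain ⟨c, hc, hcx⟩ := mem_upperClosure.1 (not_not.1 fun hx' => hdisj hx' hx)
    exact ⟨Ici c, Finset.mem_image_of_mem _ (ht.mem_toFinset.2 hc), hcx⟩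
  obtain ⟨_, hz, hsz⟩ := isIrreducible_iff_sUnion_isClosed.1 hs _ (by simp [isClosed_Ici]) hcover
  obtain ⟨c, hc, rfl⟩ := Finset.mem_image.1 hz
  exact hmem (mem_upperClosure.2 ⟨c, ht.mem_toFinset.1 hc, le_sInf hsz⟩)

instance quasiSober : QuasiSober α where
  sober {s} hs hs' := ⟨sInf s, by
    rw [isGenericPoint_def, closure_singleton]
    exact subset_antisymm ((isUpperSet_of_isClosed hs').Ici_subset
      (sInf_mem_of_isIrreducible hs hs')) fun _ => sInf_le⟩

end Topology.IsLower

theorem IsSemisubtractive.sInf {S : Type*} [CommSemiring S] {s : Set (Ideal S)}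
    (h : ∀ a ∈ s, IsSemisubtractive a) : IsSemisubtractive (sInf s) := fun x hx y hxy =>
  Submodule.mem_sInf.2 fun a ha => h a ha x (Submodule.mem_sInf.1 hx a ha) y hxy

namespace SSIdeal

variable {S : Type*} [CommSemiring S]

instance : PartialOrder (SSIdeal S) :=
  inferInstanceAs (PartialOrder {a : Ideal S // IsSemisubtractive a})

instance : CompleteSemilatticeInf (SSIdeal S) where
  sInf s := ⟨sInf (Subtype.val '' s), IsSemisubtractive.sInf (by rintro _ ⟨a, -, rfl⟩; exact a.2)⟩
  isGLB_sInf _ :=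
    ⟨fun _ ha => sInf_le (mem_image_of_mem Subtype.val ha),
      fun b h => show b.1 ≤ _ from le_sInf (forall_mem_image.2 fun _ hc => h hc)⟩

instance : IsLower (SSIdeal S) where
  topology_eq_lowerTopology := by
    show TopologicalSpace.generateFrom _ = TopologicalSpace.generateFrom _
    congr 1
    ext U
    exact exists_congr fun _ => eq_comm

end SSIdeal

theorem ssSpace_sober_general {S : Type*} [CommSemiring S]
    (D : Set (SSIdeal S)) (hD : IsIrreducible D) (hDclosed : IsClosed D) :
    ∃! a : SSIdeal S, closure {a} = D :=
  ⟨hD.genericPoint, hD.closure_genericPoint hDclosed, fun _ ha =>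
    (isGenericPoint_def.2 ha).eq (hD.isGenericPoint_genericPoint hDclosed)⟩

/-- Every semisubtractive space is sober: every nonempty irreducible closed subset has
a unique generic point. -/
theorem ssSpace_sober {S : Type*} [CommSemiring S] [Nontrivial S]
    (D : Set (SSIdeal S)) (hD : IsIrreducible D) (hDclosed : IsClosed D) :
    ∃! a : SSIdeal S, closure {a} = D :=
  ssSpace_sober_general D hD hDclosed
end

section
/- For every semiring S, the semisubtractive space Id_s(S) is quasi-compact (i.e., every open cover of Id_s(S) has a finite subcover). -/
/-- Every semisubtractive space is quasi-compact. -/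
theorem ssSpace_quasiCompact (S : Type*) [CommSemiring S] [Nontrivial S] :
    CompactSpace (SSIdeal S) := by

  -- The unit ideal is semisubtractive.
  have htopss : IsSemisubtractive (⊤ : Ideal S) := fun x _ y _ => Submodule.mem_top
  set T : SSIdeal S := ⟨⊤, htopss⟩ with hT
  -- Any open set containing T is the whole space.
  have key : ∀ U : Set (SSIdeal S), IsOpen U → T ∈ U → U = Set.univ := by
    intro U hU
    induction hU with
    | basic V hV =>
        intro hTV
        obtain ⟨a, rfl⟩ := hV
        exact absurd (le_top : a.1 ≤ (⊤ : Ideal S)) hTV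
    | univ => intro _; rfl
    | inter V W _ _ ihV ihW =>
        intro hTVW
        rw [ihV hTVW.1, ihW hTVW.2, Set.univ_inter]
    | sUnion 𝒮 _ ih =>
        intro hTU
        obtain ⟨V, hV𝒮, hTV⟩ := hTU
        apply Set.eq_univ_of_univ_subset
        rw [← ih V hV𝒮 hTV]
        exact Set.subset_sUnion_of_mem hV𝒮
  constructor
  apply isCompact_of_finite_subcover
  intro ι U hUopen hcover
  obtain ⟨i, hi⟩ := Set.mem_iUnion.mp (hcover (Set.mem_univ T))
  refine ⟨{i}, ?_⟩
  have := key (U i) (hUopen i) hi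
  intro x _
  simp [this]
end
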